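/- arXiv:2011.07258 — 3 statements merged into one kernel-verified Lean document; each statement's English description precedes it below -/
import Mathlib

section
/- There exist constants C > 0, λ > 0 and δ₀ > 0, depending only on ρ₊, a, b, μ and p but independent of φ₋ − φ₊, such that if |φ₋ − φ₊| ≤ δ₀, then the classical solution (ρ̄, φ̄) of the stationary problem is twice differentiable and satisfies |ρ̄'(x)| + |ρ̄''(x)| + |φ̄'(x)| + |φ̄''(x)| + |ρ̄(x) − ρ₊| + |φ̄(x) − φ₊| ≤ C·e^{−λ·x}·|φ₋ − φ₊| for all x ≥ 0. -/
open MeasureTheory Set Filter Topology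

noncomputable section

/-- `F(s) = ∫_{ρ₊}^s p'(τ)/(μ τ) dτ`. -/
def Ffun (p : ℝ → ℝ) (μ ρp s : ℝ) : ℝ :=
  ∫ τ in ρp..s, deriv p τ / (μ * τ)

/-- The structural condition `φ₋ - φ₊ + ∫₀^{ρ₊} p'(s)/(μ s) ds > 0`
(automatically satisfied when the integral diverges). -/
def CondPlus (p : ℝ → ℝ) (μ ρp φp φm : ℝ) : Prop :=
  ¬ IntegrableOn (fun s => deriv p s / (μ * s)) (Set.Ioo 0 ρp) ∨
    0 < φm - φp + ∫ s in Set.Ioo 0 ρp, deriv p s / (μ * s)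

/-- Classical solution of the stationary problem on `ℝ₊ = (0,∞)`. -/
def IsStatSol (p : ℝ → ℝ) (μ a b ρp φp φm : ℝ) (ρb φb : ℝ → ℝ) : Prop :=
  ContDiffOn ℝ 1 ρb (Set.Ici 0) ∧
  ContDiffOn ℝ 2 φb (Set.Ici 0) ∧
  (∀ x : ℝ, 0 ≤ x → 0 < ρb x) ∧
  (∀ x : ℝ, 0 < x → deriv (fun y => p (ρb y)) x = μ * ρb x * deriv φb x) ∧
  (∀ x : ℝ, 0 < x → deriv (deriv φb) x + a * ρb x - b * φb x = 0) ∧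
  φb 0 = φm ∧
  Tendsto ρb atTop (nhds ρp) ∧
  Tendsto φb atTop (nhds φp)

/-!
Along a solution, `Ffun (ρ̄ x) - φ̄ x` has zero derivative and tends to `-φ₊`, so
`φ̄ - φ₊ = k (ρ̄ - ρ₊)` with `k = dslope Ffun ρ₊ ρ̄ > a / b`, because `Ffun' = p' / (μ s) > a / b`.
With `a ρ₊ = b φ₊`, the Poisson equation becomes `φ̄'' = (b - a / k) (φ̄ - φ₊)` with a positive
coefficient, and the maximum principle applied to `± (φ̄ - φ₊) - |φ₋ - φ₊| e^{-λ x}` gives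
`|φ̄ - φ₊| ≤ |φ₋ - φ₊| e^{-λ x}` whenever `λ² ≤ b - a / k`. Taking `λ = 0` first keeps `ρ̄` within
`ρ₊ / 2` of `ρ₊` when `|φ₋ - φ₊|` is small; on that compact ball `k ≥ m > a / b`, which allows
`λ = √(b - a / m)`. The derivatives are then controlled through the equations:
`φ̄'' = b φ̄ - a ρ̄`, `φ̄'` by the mean value theorem on `[x, x + 1]`, and
`ρ̄' = (μ ρ̄ / p'(ρ̄)) φ̄'` together with its derivative.
-/

theorem exists_mem_uIcc_dslope_eq_deriv {f : ℝ → ℝ} {a b : ℝ}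
    (hf : ∀ x ∈ uIcc a b, DifferentiableAt ℝ f x) :
    ∃ c ∈ uIcc a b, dslope f a b = deriv f c := by
  rcases lt_trichotomy a b with hab | rfl | hba
  · obtain ⟨c, hc, hc'⟩ := exists_deriv_eq_slope f hab
      (fun x hx => (hf x (Icc_subset_uIcc hx)).continuousAt.continuousWithinAt)
      (fun x hx => (hf x (Icc_subset_uIcc (Ioo_subset_Icc_self hx))).differentiableWithinAt)
    exact ⟨c, Icc_subset_uIcc (Ioo_subset_Icc_self hc),
      by rw [dslope_of_ne _ hab.ne', slope_def_field, hc']⟩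
  · exact ⟨a, left_mem_uIcc, dslope_same f a⟩
  · obtain ⟨c, hc, hc'⟩ := exists_deriv_eq_slope f hba
      (fun x hx => (hf x (Icc_subset_uIcc' hx)).continuousAt.continuousWithinAt)
      (fun x hx => (hf x (Icc_subset_uIcc' (Ioo_subset_Icc_self hx))).differentiableWithinAt)
    exact ⟨c, Icc_subset_uIcc' (Ioo_subset_Icc_self hc),
      by rw [dslope_of_ne _ hba.ne, slope_comm, slope_def_field, hc']⟩

theorem eq_of_hasDerivAt_zero_of_tendsto {H : ℝ → ℝ} {L x : ℝ} (hc : ContinuousOn H (Ici 0))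
    (hd : ∀ y > 0, HasDerivAt H 0 y) (hlim : Tendsto H atTop (𝓝 L)) (hx : 0 ≤ x) :
    H x = L := by
  have hconst : ∀ y ≥ x, H y = H x := by
    intro y hy
    rcases hy.eq_or_lt with rfl | hxy
    · rfl
    obtain ⟨c, -, hc'⟩ := exists_hasDerivAt_eq_slope H (fun _ => 0) hxy
      (hc.mono fun t ht => hx.trans ht.1) (fun t ht => hd t (hx.trans_lt ht.1))
    rw [eq_comm, div_eq_zero_iff, sub_eq_zero, sub_eq_zero] at hc'
    exact hc'.resolve_right hxy.ne'
  refine tendsto_nhds_unique (tendsto_const_nhds.congr' ?_) hlim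
  filter_upwards [eventually_ge_atTop x] with y hy using (hconst y hy).symm

theorem not_isLocalMax_of_hasDerivAt_deriv_pos {f f' : ℝ → ℝ} {x₀ c : ℝ}
    (hf : ∀ᶠ x in 𝓝 x₀, HasDerivAt f (f' x) x) (hf' : HasDerivAt f' c x₀) (hc : 0 < c) :
    ¬ IsLocalMax f x₀ := by
  intro hmax
  have hderiv : deriv f =ᶠ[𝓝 x₀] f' := hf.mono fun x hx => hx.deriv
  have hmin : IsLocalMin f x₀ :=
    isLocalMin_of_deriv_deriv_pos (by rwa [hderiv.deriv_eq, hf'.deriv])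
      (by rw [hderiv.eq_of_nhds]; exact hmax.hasDerivAt_eq_zero hf.self_of_nhds)
      hf.self_of_nhds.continuousAt
  have hconst : f =ᶠ[𝓝 x₀] fun _ => f x₀ :=
    (hmin.and hmax).mono fun x hx => le_antisymm hx.2 hx.1
  have hzero : f' =ᶠ[𝓝 x₀] fun _ => 0 := hderiv.symm.trans (by simpa using hconst.deriv)
  exact hc.ne' (hf'.unique ((hasDerivAt_const x₀ 0).congr_of_eventuallyEq hzero))

theorem nonpos_of_deriv_deriv_pos {f f' f'' : ℝ → ℝ} (hf : ContinuousOn f (Ici 0))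
    (hf' : ∀ x > 0, HasDerivAt f (f' x) x) (hf'' : ∀ x > 0, HasDerivAt f' (f'' x) x)
    (hpos : ∀ x > 0, 0 < f x → 0 < f'' x) (h0 : f 0 ≤ 0)
    (htop : ∀ ε > 0, ∀ᶠ x in atTop, f x < ε) {x : ℝ} (hx : 0 ≤ x) : f x ≤ 0 := by
  by_contra! hfx
  obtain ⟨X, hfX, hxX⟩ := ((htop _ hfx).and (eventually_gt_atTop x)).exists
  obtain ⟨x₀, hx₀, hmax⟩ := isCompact_Icc.exists_isMaxOn (nonempty_Icc.2 (hx.trans hxX.le))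
    (hf.mono Icc_subset_Ici_self)
  have hfx₀ : f x ≤ f x₀ := hmax ⟨hx, hxX.le⟩
  have h0x₀ : 0 < x₀ := hx₀.1.lt_of_ne (by rintro rfl; linarith)
  have hx₀X : x₀ < X := hx₀.2.lt_of_ne (by rintro rfl; linarith)
  exact not_isLocalMax_of_hasDerivAt_deriv_pos ((eventually_gt_nhds h0x₀).mono hf')
    (hf'' x₀ h0x₀) (hpos x₀ h0x₀ (by linarith)) (hmax.isLocalMax (Icc_mem_nhds h0x₀ hx₀X))

theorem le_mul_exp_of_deriv_deriv_eq_mul {u u' u'' c : ℝ → ℝ} {K lam : ℝ}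
    (hu : ContinuousOn u (Ici 0)) (hu' : ∀ x > 0, HasDerivAt u (u' x) x)
    (hu'' : ∀ x > 0, HasDerivAt u' (u'' x) x) (hc : ∀ x > 0, u'' x = c x * u x)
    (hcpos : ∀ x > 0, 0 < c x) (hlam : ∀ x > 0, lam ^ 2 ≤ c x)
    (htop : Tendsto u atTop (𝓝 0)) (hK : 0 ≤ K) (hu0 : u 0 ≤ K) {x : ℝ} (hx : 0 ≤ x) :
    u x ≤ K * Real.exp (-lam * x) := by
  have hexp : ∀ y, HasDerivAt (fun y => K * Real.exp (-lam * y))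
      (-lam * (K * Real.exp (-lam * y))) y := fun y =>
    ((((hasDerivAt_id' y).const_mul (-lam)).exp).const_mul K).congr_deriv (by ring)
  have key := nonpos_of_deriv_deriv_pos (f := fun y => u y - K * Real.exp (-lam * y))
    (f' := fun y => u' y + lam * (K * Real.exp (-lam * y)))
    (f'' := fun y => u'' y - lam ^ 2 * (K * Real.exp (-lam * y)))
    (hu.sub (by fun_prop)) (fun y hy => ((hu' y hy).sub (hexp y)).congr_deriv (by ring))
    (fun y hy => ((hu'' y hy).add ((hexp y).const_mul lam)).congr_deriv (by ring))
    (fun y hy hpos => by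
      have hE : 0 ≤ K * Real.exp (-lam * y) := by positivity
      rw [hc y hy]
      nlinarith [mul_lt_mul_of_pos_left (sub_pos.1 hpos) (hcpos y hy),
        mul_le_mul_of_nonneg_right (hlam y hy) hE])
    (by simpa using hu0)
    (fun ε hε => (htop.eventually (eventually_lt_nhds hε)).mono fun y hy => by
      have : 0 ≤ K * Real.exp (-lam * y) := by positivity
      linarith)
    hx
  linarith

theorem abs_le_mul_exp_of_deriv_deriv_eq_mul {u u' u'' c : ℝ → ℝ} {lam : ℝ}
    (hu : ContinuousOn u (Ici 0)) (hu' : ∀ x > 0, HasDerivAt u (u' x) x)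
    (hu'' : ∀ x > 0, HasDerivAt u' (u'' x) x) (hc : ∀ x > 0, u'' x = c x * u x)
    (hcpos : ∀ x > 0, 0 < c x) (hlam : ∀ x > 0, lam ^ 2 ≤ c x)
    (htop : Tendsto u atTop (𝓝 0)) {x : ℝ} (hx : 0 ≤ x) :
    |u x| ≤ |u 0| * Real.exp (-lam * x) := by
  refine abs_le.2 ⟨?_, le_mul_exp_of_deriv_deriv_eq_mul hu hu' hu'' hc hcpos hlam htop
    (abs_nonneg _) (le_abs_self _) hx⟩
  have := le_mul_exp_of_deriv_deriv_eq_mul (u := fun y => -u y) (u' := fun y => -u' y)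
    (u'' := fun y => -u'' y) hu.neg (fun y hy => (hu' y hy).neg) (fun y hy => (hu'' y hy).neg)
    (fun y hy => by simp [hc y hy]) hcpos hlam (by simpa using htop.neg) (abs_nonneg _)
    (neg_le_abs _) hx
  linarith

theorem abs_le_add_of_abs_deriv_deriv_le {f f' f'' : ℝ → ℝ} {x A B : ℝ}
    (hf : ContinuousOn f (Icc x (x + 1))) (hf'c : ContinuousOn f' (Icc x (x + 1)))
    (hf' : ∀ t ∈ Ioo x (x + 1), HasDerivAt f (f' t) t)
    (hf'' : ∀ t ∈ Ioo x (x + 1), HasDerivAt f' (f'' t) t)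
    (hA : |f (x + 1) - f x| ≤ A) (hB : ∀ t ∈ Ioo x (x + 1), |f'' t| ≤ B) : |f' x| ≤ A + B := by
  obtain ⟨ξ, hξ, hξeq⟩ := exists_hasDerivAt_eq_slope f f' (lt_add_one x) hf hf'
  obtain ⟨η, hη, hηeq⟩ := exists_hasDerivAt_eq_slope f' f'' hξ.1
    (hf'c.mono (Icc_subset_Icc_right hξ.2.le))
    (fun t ht => hf'' t ⟨ht.1, ht.2.trans hξ.2⟩)
  have hηB := hB η ⟨hη.1, hη.2.trans hξ.2⟩
  have hlen : |ξ - x| ≤ 1 := by rw [abs_le]; constructor <;> linarith [hξ.1, hξ.2]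
  have hrepr : f' x = f' ξ - (ξ - x) * f'' η := by
    rw [hηeq]; field_simp [(sub_pos.2 hξ.1).ne']; ring
  have hξA : |f' ξ| ≤ A := by rwa [hξeq, add_sub_cancel_left, div_one]
  calc |f' x| ≤ |f' ξ| + |ξ - x| * |f'' η| := by
        rw [hrepr, ← abs_mul]; exact abs_sub _ _
    _ ≤ A + 1 * B := by gcongr
    _ = A + B := by ring

theorem eqOn_Ici_of_eqOn_Ioi {f g : ℝ → ℝ} {a : ℝ} (hf : ContinuousOn f (Ici a))
    (hg : ContinuousOn g (Ici a)) (h : EqOn f g (Ioi a)) : EqOn f g (Ici a) :=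
  h.of_subset_closure hf hg Ioi_subset_Ici_self (closure_Ioi a).ge

section Pressure

variable {p : ℝ → ℝ} {μ a b ρp : ℝ}

theorem Ffun_self : Ffun p μ ρp ρp = 0 := intervalIntegral.integral_same

theorem continuousOn_deriv_div_mul (hμ : μ ≠ 0) (hp : ContinuousOn (deriv p) (Ioi 0)) :
    ContinuousOn (fun s => deriv p s / (μ * s)) (Ioi 0) :=
  hp.div (continuousOn_const.mul continuousOn_id) fun _ hs => mul_ne_zero hμ (ne_of_gt hs)

theorem continuousOn_deriv_mul_div_deriv (hp : ContDiffOn ℝ 2 p (Ioi 0))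
    (hp0 : ∀ s > 0, deriv p s ≠ 0) :
    ContinuousOn (deriv fun s => μ * s / deriv p s) (Ioi 0) :=
  ((contDiffOn_const.mul contDiffOn_id).div (hp.deriv_of_isOpen isOpen_Ioi (by norm_num))
    hp0).continuousOn_deriv_of_isOpen isOpen_Ioi le_rfl

theorem hasDerivAt_Ffun (hμ : μ ≠ 0) (hp : ContinuousOn (deriv p) (Ioi 0)) (hρp : 0 < ρp)
    {s : ℝ} (hs : 0 < s) : HasDerivAt (Ffun p μ ρp) (deriv p s / (μ * s)) s := by
  have hg := continuousOn_deriv_div_mul hμ hp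
  exact intervalIntegral.integral_hasDerivAt_right
    ((hg.mono fun τ hτ => (lt_min hρp hs).trans_le hτ.1).intervalIntegrable)
    (hg.stronglyMeasurableAtFilter isOpen_Ioi s hs) (hg.continuousAt (isOpen_Ioi.mem_nhds hs))

theorem exists_mem_uIcc_dslope_Ffun_eq (hμ : μ ≠ 0) (hp : ContinuousOn (deriv p) (Ioi 0))
    (hρp : 0 < ρp) {s : ℝ} (hs : 0 < s) :
    ∃ c ∈ uIcc ρp s, 0 < c ∧ dslope (Ffun p μ ρp) ρp s = deriv p c / (μ * c) := by
  have hpos : ∀ c ∈ uIcc ρp s, 0 < c := fun c hc => (lt_min hρp hs).trans_le hc.1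
  obtain ⟨c, hc, hslope⟩ := exists_mem_uIcc_dslope_eq_deriv fun c hc =>
    (hasDerivAt_Ffun hμ hp hρp (hpos c hc)).differentiableAt
  exact ⟨c, hc, hpos c hc, hslope.trans (hasDerivAt_Ffun hμ hp hρp (hpos c hc)).deriv⟩

theorem div_lt_deriv_div (hμ : 0 < μ) (hp' : ∀ ρ > 0, a * μ / b * ρ < deriv p ρ)
    {s : ℝ} (hs : 0 < s) : a / b < deriv p s / (μ * s) := by
  rw [lt_div_iff₀ (by positivity)]
  exact (by ring : a / b * (μ * s) = a * μ / b * s).trans_lt (hp' s hs)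

theorem deriv_pos_of_mul_lt_deriv (hμ : 0 < μ) (ha : 0 < a) (hb : 0 < b)
    (hp' : ∀ ρ > 0, a * μ / b * ρ < deriv p ρ) {s : ℝ} (hs : 0 < s) : 0 < deriv p s :=
  lt_trans (by positivity) (hp' s hs)

theorem abs_mul_div_deriv_le (hμ : 0 < μ) (ha : 0 < a) (hb : 0 < b)
    (hp' : ∀ ρ > 0, a * μ / b * ρ < deriv p ρ) {s : ℝ} (hs : 0 < s) :
    |μ * s / deriv p s| ≤ b / a := by
  have hlt := div_lt_deriv_div hμ hp' hs
  rw [abs_of_pos (div_pos (by positivity) (deriv_pos_of_mul_lt_deriv hμ ha hb hp' hs)), ← inv_div,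
    ← inv_div a b]
  exact inv_anti₀ (by positivity) hlt.le

theorem div_lt_dslope_Ffun (hμ : 0 < μ) (hp : ContinuousOn (deriv p) (Ioi 0))
    (hp' : ∀ ρ > 0, a * μ / b * ρ < deriv p ρ) (hρp : 0 < ρp) {s : ℝ} (hs : 0 < s) :
    a / b < dslope (Ffun p μ ρp) ρp s := by
  obtain ⟨c, -, hc, hslope⟩ := exists_mem_uIcc_dslope_Ffun_eq hμ.ne' hp hρp hs
  exact hslope ▸ div_lt_deriv_div hμ hp' hc

theorem le_dslope_Ffun (hμ : μ ≠ 0) (hp : ContinuousOn (deriv p) (Ioi 0)) (hρp : 0 < ρp)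
    {m r s : ℝ} (hm : ∀ c ∈ Metric.closedBall ρp r, m ≤ deriv p c / (μ * c))
    (hs : s ∈ Metric.closedBall ρp r) (hs0 : 0 < s) : m ≤ dslope (Ffun p μ ρp) ρp s := by
  obtain ⟨c, hc, -, hslope⟩ := exists_mem_uIcc_dslope_Ffun_eq hμ hp hρp hs0
  exact hslope ▸ hm c ((convex_closedBall ρp r).ordConnected.uIcc_subset
    (Metric.mem_closedBall_self (dist_nonneg.trans hs)) hs hc)

theorem div_dslope_Ffun_lt (hμ : 0 < μ) (ha : 0 < a) (hb : 0 < b)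
    (hp : ContinuousOn (deriv p) (Ioi 0)) (hp' : ∀ ρ > 0, a * μ / b * ρ < deriv p ρ)
    (hρp : 0 < ρp) {s : ℝ} (hs : 0 < s) : a / dslope (Ffun p μ ρp) ρp s < b := by
  have hk := div_lt_dslope_Ffun hμ hp hp' hρp hs
  exact (div_lt_comm₀ hb (lt_trans (by positivity) hk)).1 hk

end Pressure

theorem abs_mul_sub_mul_le {a b ρ φ ρp φp : ℝ} (ha : 0 ≤ a) (hb : 0 ≤ b)
    (hcomp : a * ρp = b * φp) : |b * φ - a * ρ| ≤ b * |φ - φp| + a * |ρ - ρp| := by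
  calc |b * φ - a * ρ| = |b * (φ - φp) - a * (ρ - ρp)| := by congr 1; linear_combination -hcomp
    _ ≤ b * |φ - φp| + a * |ρ - ρp| := by
      refine (abs_sub _ _).trans_eq ?_
      rw [abs_mul, abs_mul, abs_of_nonneg ha, abs_of_nonneg hb]

namespace IsStatSol

variable {p : ℝ → ℝ} {μ a b ρp φp φm : ℝ} {ρb φb : ℝ → ℝ}

theorem hasDerivAt_rho (hsol : IsStatSol p μ a b ρp φp φm ρb φb) {x : ℝ} (hx : 0 < x) :
    HasDerivAt ρb (deriv ρb x) x :=
  ((hsol.1.contDiffAt (Ici_mem_nhds hx)).differentiableAt one_ne_zero).hasDerivAt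

theorem hasDerivAt_phi (hsol : IsStatSol p μ a b ρp φp φm ρb φb) {x : ℝ} (hx : 0 < x) :
    HasDerivAt φb (deriv φb x) x :=
  ((hsol.2.1.contDiffAt (Ici_mem_nhds hx)).differentiableAt (by norm_num)).hasDerivAt

theorem hasDerivAt_deriv_phi (hsol : IsStatSol p μ a b ρp φp φm ρb φb) {x : ℝ} (hx : 0 < x) :
    HasDerivAt (deriv φb) (deriv (deriv φb) x) x := by
  have h : ContDiffOn ℝ 1 (deriv φb) (Ioi 0) :=
    (hsol.2.1.mono Ioi_subset_Ici_self).deriv_of_isOpen isOpen_Ioi (by norm_num)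
  exact ((h.contDiffAt (isOpen_Ioi.mem_nhds hx)).differentiableAt one_ne_zero).hasDerivAt

theorem deriv_mul_deriv_rho_eq (hsol : IsStatSol p μ a b ρp φp φm ρb φb)
    (hp : ContDiffOn ℝ 1 p (Ioi 0)) {x : ℝ} (hx : 0 < x) :
    deriv p (ρb x) * deriv ρb x = μ * ρb x * deriv φb x := by
  have hpx : HasDerivAt p (deriv p (ρb x)) (ρb x) :=
    ((hp.contDiffAt (isOpen_Ioi.mem_nhds (hsol.2.2.1 x hx.le))).differentiableAt
      one_ne_zero).hasDerivAt
  exact (hpx.comp x (hsol.hasDerivAt_rho hx)).deriv ▸ hsol.2.2.2.1 x hx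

theorem Ffun_rho_eq (hsol : IsStatSol p μ a b ρp φp φm ρb φb) (hμ : μ ≠ 0)
    (hp : ContDiffOn ℝ 1 p (Ioi 0)) (hρp : 0 < ρp) {x : ℝ} (hx : 0 ≤ x) :
    Ffun p μ ρp (ρb x) = φb x - φp := by
  obtain ⟨hρ, hφ, hρpos, -, -, -, hρtop, hφtop⟩ := id hsol
  have hF : ∀ s > 0, HasDerivAt (Ffun p μ ρp) (deriv p s / (μ * s)) s := fun s hs =>
    hasDerivAt_Ffun hμ (hp.continuousOn_deriv_of_isOpen isOpen_Ioi le_rfl) hρp hs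
  have hderiv : ∀ y > 0, HasDerivAt (fun y => Ffun p μ ρp (ρb y) - φb y) 0 y := by
    intro y hy
    refine (((hF _ (hρpos y hy.le)).comp y (hsol.hasDerivAt_rho hy)).sub
      (hsol.hasDerivAt_phi hy)).congr_deriv ?_
    field_simp [(hρpos y hy.le).ne']
    linear_combination hsol.deriv_mul_deriv_rho_eq hp hy
  have key := eq_of_hasDerivAt_zero_of_tendsto
    ((ContinuousOn.comp (fun s hs => (hF s hs).continuousAt.continuousWithinAt)
      hρ.continuousOn fun y hy => hρpos y hy).sub hφ.continuousOn) hderiv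
    (((hF ρp hρp).continuousAt.tendsto.comp hρtop).sub hφtop) hx
  simp only [Pi.sub_apply, Function.comp_apply, Ffun_self] at key
  linarith

theorem phi_sub_eq_dslope_mul (hsol : IsStatSol p μ a b ρp φp φm ρb φb) (hμ : μ ≠ 0)
    (hp : ContDiffOn ℝ 1 p (Ioi 0)) (hρp : 0 < ρp) {x : ℝ} (hx : 0 ≤ x) :
    φb x - φp = dslope (Ffun p μ ρp) ρp (ρb x) * (ρb x - ρp) := by
  rw [← hsol.Ffun_rho_eq hμ hp hρp hx, mul_comm, ← smul_eq_mul, sub_smul_dslope, Ffun_self,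
    sub_zero]

theorem mul_abs_rho_sub_le (hsol : IsStatSol p μ a b ρp φp φm ρb φb) (hμ : μ ≠ 0)
    (hp : ContDiffOn ℝ 1 p (Ioi 0)) (hρp : 0 < ρp) {c x : ℝ} (hc0 : 0 ≤ c)
    (hc : c ≤ dslope (Ffun p μ ρp) ρp (ρb x)) (hx : 0 ≤ x) :
    c * |ρb x - ρp| ≤ |φb x - φp| := by
  rw [hsol.phi_sub_eq_dslope_mul hμ hp hρp hx, abs_mul, abs_of_nonneg (hc0.trans hc)]
  exact mul_le_mul_of_nonneg_right hc (abs_nonneg _)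

theorem deriv_deriv_phi_eq (hsol : IsStatSol p μ a b ρp φp φm ρb φb) (hμ : 0 < μ)
    (ha : 0 < a) (hb : 0 < b) (hp : ContDiffOn ℝ 1 p (Ioi 0))
    (hp' : ∀ ρ > 0, a * μ / b * ρ < deriv p ρ) (hρp : 0 < ρp) (hcomp : a * ρp = b * φp)
    {x : ℝ} (hx : 0 < x) :
    deriv (deriv φb) x = (b - a / dslope (Ffun p μ ρp) ρp (ρb x)) * (φb x - φp) := by
  have hk := div_lt_dslope_Ffun hμ (hp.continuousOn_deriv_of_isOpen isOpen_Ioi le_rfl) hp'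
    hρp (hsol.2.2.1 x hx.le)
  have hk0 : dslope (Ffun p μ ρp) ρp (ρb x) ≠ 0 := (lt_trans (by positivity) hk).ne'
  have hrel := hsol.phi_sub_eq_dslope_mul hμ.ne' hp hρp hx.le
  rw [hrel]
  field_simp
  linear_combination hsol.2.2.2.2.1 x hx + b * hrel - hcomp

theorem abs_phi_sub_le_mul_exp (hsol : IsStatSol p μ a b ρp φp φm ρb φb) (hμ : 0 < μ)
    (ha : 0 < a) (hb : 0 < b) (hp : ContDiffOn ℝ 1 p (Ioi 0))
    (hp' : ∀ ρ > 0, a * μ / b * ρ < deriv p ρ) (hρp : 0 < ρp) (hcomp : a * ρp = b * φp)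
    {lam : ℝ} (hlam : ∀ x > 0, lam ^ 2 ≤ b - a / dslope (Ffun p μ ρp) ρp (ρb x))
    {x : ℝ} (hx : 0 ≤ x) :
    |φb x - φp| ≤ |φm - φp| * Real.exp (-lam * x) := by
  have hc : ∀ y > 0, 0 < b - a / dslope (Ffun p μ ρp) ρp (ρb y) := fun y hy =>
    sub_pos.2 (div_dslope_Ffun_lt hμ ha hb (hp.continuousOn_deriv_of_isOpen isOpen_Ioi le_rfl) hp'
      hρp (hsol.2.2.1 y hy.le))
  have h := abs_le_mul_exp_of_deriv_deriv_eq_mul (u := fun y => φb y - φp)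
    (hsol.2.1.continuousOn.sub continuousOn_const)
    (fun y hy => (hsol.hasDerivAt_phi hy).sub_const φp) (fun y hy => hsol.hasDerivAt_deriv_phi hy)
    (fun y hy => hsol.deriv_deriv_phi_eq hμ ha hb hp hp' hρp hcomp hy) hc hlam
    (tendsto_sub_nhds_zero_iff.2 hsol.2.2.2.2.2.2.2) hx
  rwa [hsol.2.2.2.2.2.1] at h

theorem abs_sub_le_exp (hsol : IsStatSol p μ a b ρp φp φm ρb φb) (hμ : 0 < μ)
    (ha : 0 < a) (hb : 0 < b) (hp : ContDiffOn ℝ 1 p (Ioi 0))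
    (hp' : ∀ ρ > 0, a * μ / b * ρ < deriv p ρ) (hρp : 0 < ρp) (hcomp : a * ρp = b * φp)
    {m : ℝ} (hm : a / b < m)
    (hmJ : ∀ s ∈ Metric.closedBall ρp (ρp / 2), m ≤ deriv p s / (μ * s))
    (hK : |φm - φp| ≤ a * ρp / (2 * b)) {x : ℝ} (hx : 0 ≤ x) :
    ρb x ∈ Metric.closedBall ρp (ρp / 2) ∧
      |φb x - φp| ≤ |φm - φp| * Real.exp (-√(b - a / m) * x) ∧
      m * |ρb x - ρp| ≤ |φb x - φp| := by
  have hp1 := hp.continuousOn_deriv_of_isOpen isOpen_Ioi le_rfl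
  have hm0 : 0 < m := lt_trans (by positivity) hm
  have hcrude : ∀ y ≥ 0, |φb y - φp| ≤ |φm - φp| := fun y hy => by
    simpa using hsol.abs_phi_sub_le_mul_exp hμ ha hb hp hp' hρp hcomp (lam := 0)
      (fun z hz => by
        simpa using (div_dslope_Ffun_lt hμ ha hb hp1 hp' hρp (hsol.2.2.1 z hz.le)).le) hy
  have hball : ∀ y ≥ 0, ρb y ∈ Metric.closedBall ρp (ρp / 2) := by
    intro y hy
    rw [Metric.mem_closedBall, Real.dist_eq]
    have h := hsol.mul_abs_rho_sub_le hμ.ne' hp hρp (by positivity)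
      (div_lt_dslope_Ffun hμ hp1 hp' hρp (hsol.2.2.1 y hy)).le hy
    calc |ρb y - ρp| = b / a * (a / b * |ρb y - ρp|) := by field_simp
      _ ≤ b / a * (a * ρp / (2 * b)) := by gcongr; linarith [hcrude y hy]
      _ = ρp / 2 := by field_simp
  have hmk : ∀ y ≥ 0, m ≤ dslope (Ffun p μ ρp) ρp (ρb y) := fun y hy =>
    le_dslope_Ffun hμ.ne' hp1 hρp hmJ (hball y hy) (hsol.2.2.1 y hy)
  refine ⟨hball x hx, hsol.abs_phi_sub_le_mul_exp hμ ha hb hp hp' hρp hcomp (fun y hy => ?_) hx,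
    hsol.mul_abs_rho_sub_le hμ.ne' hp hρp hm0.le (hmk x hx) hx⟩
  rw [Real.sq_sqrt (sub_nonneg.2 ((div_lt_comm₀ hb hm0).1 hm).le)]
  gcongr
  exact hmk y hy.le

theorem hasDerivWithinAt_derivWithin_phi (hsol : IsStatSol p μ a b ρp φp φm ρb φb) {x : ℝ}
    (hx : 0 ≤ x) :
    HasDerivWithinAt (derivWithin φb (Ici 0)) (b * φb x - a * ρb x) (Ici 0) x := by
  obtain ⟨hρ, hφ, -, -, hode, -⟩ := id hsol
  have hφ₁ : ContDiffOn ℝ 1 (derivWithin φb (Ici 0)) (Ici 0) :=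
    hφ.derivWithin (uniqueDiffOn_Ici 0) (by norm_num)
  have heq : EqOn (derivWithin (derivWithin φb (Ici 0)) (Ici 0))
      (fun y => b * φb y - a * ρb y) (Ici 0) := by
    refine eqOn_Ici_of_eqOn_Ioi (hφ₁.continuousOn_derivWithin (uniqueDiffOn_Ici 0) le_rfl)
      ((continuousOn_const.mul hφ.continuousOn).sub (continuousOn_const.mul hρ.continuousOn))
      fun y (hy : 0 < y) => ?_
    have hloc : derivWithin φb (Ici 0) =ᶠ[𝓝 y] deriv φb :=
      (eventually_gt_nhds hy).mono fun z hz => derivWithin_of_mem_nhds (Ici_mem_nhds hz)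
    rw [derivWithin_of_mem_nhds (Ici_mem_nhds hy), hloc.deriv_eq]
    linarith [hode y hy]
  exact ((hφ₁.differentiableOn one_ne_zero) x hx).hasDerivWithinAt.congr_deriv (heq hx)

theorem derivWithin_rho_eq (hsol : IsStatSol p μ a b ρp φp φm ρb φb)
    (hp : ContDiffOn ℝ 1 p (Ioi 0)) (hp0 : ∀ s > 0, deriv p s ≠ 0) :
    EqOn (derivWithin ρb (Ici 0))
      (fun x => μ * ρb x / deriv p (ρb x) * derivWithin φb (Ici 0) x) (Ici 0) := by
  obtain ⟨hρ, hφ, hρpos, -⟩ := id hsol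
  refine eqOn_Ici_of_eqOn_Ioi (hρ.continuousOn_derivWithin (uniqueDiffOn_Ici 0) le_rfl) ?_
    fun x (hx : 0 < x) => ?_
  · exact ((continuousOn_const.mul hρ.continuousOn).div
      ((hp.continuousOn_deriv_of_isOpen isOpen_Ioi le_rfl).comp hρ.continuousOn
        fun y hy => hρpos y hy) fun y hy => hp0 _ (hρpos y hy)).mul
      (hφ.continuousOn_derivWithin (uniqueDiffOn_Ici 0) (by norm_num))
  · simp only [derivWithin_of_mem_nhds (Ici_mem_nhds hx)]
    field_simp [hp0 _ (hρpos x hx.le)]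
    linear_combination hsol.deriv_mul_deriv_rho_eq hp hx

theorem hasDerivWithinAt_derivWithin_rho (hsol : IsStatSol p μ a b ρp φp φm ρb φb)
    (hp : ContDiffOn ℝ 2 p (Ioi 0)) (hp0 : ∀ s > 0, deriv p s ≠ 0) {x : ℝ} (hx : 0 ≤ x) :
    HasDerivWithinAt (derivWithin ρb (Ici 0))
      (deriv (fun s => μ * s / deriv p s) (ρb x) * derivWithin ρb (Ici 0) x *
          derivWithin φb (Ici 0) x +
        μ * ρb x / deriv p (ρb x) * (b * φb x - a * ρb x)) (Ici 0) x := by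
  have hs : 0 < ρb x := hsol.2.2.1 x hx
  have hp' : ContDiffOn ℝ 1 (deriv p) (Ioi 0) := hp.deriv_of_isOpen isOpen_Ioi (by norm_num)
  have hh : HasDerivAt (fun s => μ * s / deriv p s)
      (deriv (fun s => μ * s / deriv p s) (ρb x)) (ρb x) :=
    ((differentiableAt_id.const_mul μ).div
      ((hp'.contDiffAt (isOpen_Ioi.mem_nhds hs)).differentiableAt one_ne_zero)
      (hp0 _ hs)).hasDerivAt
  have hρ : HasDerivWithinAt ρb (derivWithin ρb (Ici 0) x) (Ici 0) x :=
    ((hsol.1.differentiableOn one_ne_zero) x hx).hasDerivWithinAt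
  exact ((hh.comp_hasDerivWithinAt x hρ).mul
    (hsol.hasDerivWithinAt_derivWithin_phi hx)).congr_of_mem
    (hsol.derivWithin_rho_eq (hp.of_le one_le_two) hp0) hx

theorem abs_derivWithin_phi_le (hsol : IsStatSol p μ a b ρp φp φm ρb φb) {E : ℝ → ℝ} {B : ℝ}
    (hE : AntitoneOn E (Ici 0)) (hB : 0 ≤ B) (hφ : ∀ x ≥ 0, |φb x - φp| ≤ E x)
    (hφ'' : ∀ x ≥ 0, |b * φb x - a * ρb x| ≤ B * E x) {x : ℝ} (hx : 0 ≤ x) :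
    |derivWithin φb (Ici 0) x| ≤ (2 + B) * E x := by
  have hφc := hsol.2.1.continuousOn
  have hφ₁c := hsol.2.1.continuousOn_derivWithin (uniqueDiffOn_Ici 0) (by norm_num)
  have hsub : Icc x (x + 1) ⊆ Ici 0 := fun t ht => hx.trans ht.1
  have hnhds : ∀ t ∈ Ioo x (x + 1), Ici (0 : ℝ) ∈ 𝓝 t := fun t ht =>
    Ici_mem_nhds (hx.trans_lt ht.1)
  have hEx : E (x + 1) ≤ E x := hE hx (by simp only [mem_Ici]; linarith) (by linarith)
  have hA : |φb (x + 1) - φb x| ≤ 2 * E x := by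
    calc |φb (x + 1) - φb x| ≤ |φb (x + 1) - φp| + |φp - φb x| := abs_sub_le _ _ _
      _ ≤ E (x + 1) + E x := by
          rw [abs_sub_comm φp]; exact add_le_add (hφ _ (by linarith)) (hφ x hx)
      _ ≤ 2 * E x := by linarith
  have h := abs_le_add_of_abs_deriv_deriv_le (hφc.mono hsub) (hφ₁c.mono hsub)
    (fun t ht => (((hsol.2.1.differentiableOn two_ne_zero) t (hsub (Ioo_subset_Icc_self ht))
      ).hasDerivWithinAt).hasDerivAt (hnhds t ht))
    (fun t ht => (hsol.hasDerivWithinAt_derivWithin_phi (hx.trans ht.1.le)).hasDerivAt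
      (hnhds t ht)) hA
    (fun t ht => (hφ'' t (hx.trans ht.1.le)).trans
      (mul_le_mul_of_nonneg_left (hE hx (hx.trans ht.1.le) ht.1.le) hB))
  linarith

theorem abs_derivWithin_rho_le (hsol : IsStatSol p μ a b ρp φp φm ρb φb) (hμ : 0 < μ)
    (ha : 0 < a) (hb : 0 < b) (hp : ContDiffOn ℝ 1 p (Ioi 0))
    (hp' : ∀ ρ > 0, a * μ / b * ρ < deriv p ρ) {x : ℝ} (hx : 0 ≤ x) :
    |derivWithin ρb (Ici 0) x| ≤ b / a * |derivWithin φb (Ici 0) x| := by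
  rw [hsol.derivWithin_rho_eq hp (fun s hs => (deriv_pos_of_mul_lt_deriv hμ ha hb hp' hs).ne') hx,
    abs_mul]
  exact mul_le_mul_of_nonneg_right (abs_mul_div_deriv_le hμ ha hb hp' (hsol.2.2.1 x hx))
    (abs_nonneg _)

theorem abs_derivWithin_derivWithin_rho_le (hsol : IsStatSol p μ a b ρp φp φm ρb φb)
    (hμ : 0 < μ) (ha : 0 < a) (hb : 0 < b) (hp : ContDiffOn ℝ 2 p (Ioi 0))
    (hp' : ∀ ρ > 0, a * μ / b * ρ < deriv p ρ) {M x : ℝ} (hx : 0 ≤ x)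
    (hM : |deriv (fun s => μ * s / deriv p s) (ρb x)| ≤ M) :
    |derivWithin (derivWithin ρb (Ici 0)) (Ici 0) x| ≤
      M * |derivWithin ρb (Ici 0) x| * |derivWithin φb (Ici 0) x| +
        b / a * |b * φb x - a * ρb x| := by
  have hp0 : ∀ s > 0, deriv p s ≠ 0 := fun s hs => (deriv_pos_of_mul_lt_deriv hμ ha hb hp' hs).ne'
  rw [(hsol.hasDerivWithinAt_derivWithin_rho hp hp0 hx).derivWithin (uniqueDiffOn_Ici 0 x hx)]
  refine (abs_add_le _ _).trans ?_
  simp only [abs_mul]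
  gcongr
  exact abs_mul_div_deriv_le hμ ha hb hp' (hsol.2.2.1 x hx)

theorem sum_abs_le_mul_exp (hsol : IsStatSol p μ a b ρp φp φm ρb φb) (hμ : 0 < μ)
    (ha : 0 < a) (hb : 0 < b) (hp : ContDiffOn ℝ 2 p (Ioi 0))
    (hp' : ∀ ρ > 0, a * μ / b * ρ < deriv p ρ) (hρp : 0 < ρp) (hcomp : a * ρp = b * φp)
    {m M : ℝ} (hm : a / b < m)
    (hmJ : ∀ s ∈ Metric.closedBall ρp (ρp / 2), m ≤ deriv p s / (μ * s))
    (hM : ∀ s ∈ Metric.closedBall ρp (ρp / 2), |deriv (fun s => μ * s / deriv p s) s| ≤ M)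
    (hK : |φm - φp| ≤ a * ρp / (2 * b)) {x : ℝ} (hx : 0 ≤ x) :
    |derivWithin ρb (Ici 0) x| + |derivWithin (derivWithin ρb (Ici 0)) (Ici 0) x| +
        |derivWithin φb (Ici 0) x| + |derivWithin (derivWithin φb (Ici 0)) (Ici 0) x| +
        |ρb x - ρp| + |φb x - φp| ≤
      (1 + 1 / m + (b + a / m) + (2 + (b + a / m)) + b / a * (2 + (b + a / m)) +
          M * (b / a * (2 + (b + a / m))) * ((2 + (b + a / m)) * (a * ρp / (2 * b))) +
          b / a * (b + a / m)) * Real.exp (-√(b - a / m) * x) * |φm - φp| := by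
  have hp1 : ContDiffOn ℝ 1 p (Ioi 0) := hp.of_le one_le_two
  have hm0 : 0 < m := lt_trans (by positivity) hm
  set B := b + a / m
  set A := 2 + B
  set E := fun y => |φm - φp| * Real.exp (-√(b - a / m) * y) with hEdef
  have hE : AntitoneOn E (Ici 0) := fun y _ z _ hyz =>
    mul_le_mul_of_nonneg_left (Real.exp_le_exp.2 (by nlinarith [Real.sqrt_nonneg (b - a / m)]))
      (abs_nonneg _)
  have hEδ : E x ≤ a * ρp / (2 * b) :=
    (mul_le_of_le_one_right (abs_nonneg _) (Real.exp_le_one_iff.2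
      (by nlinarith [Real.sqrt_nonneg (b - a / m)]))).trans hK
  have h0 := fun y (hy : 0 ≤ y) => hsol.abs_sub_le_exp hμ ha hb hp1 hp' hρp hcomp hm hmJ hK hy
  have hρ : |ρb x - ρp| ≤ 1 / m * E x := by
    rw [one_div, inv_mul_eq_div, le_div_iff₀ hm0, mul_comm]
    exact (h0 x hx).2.2.trans (h0 x hx).2.1
  have hφ₂ : ∀ y ≥ 0, |b * φb y - a * ρb y| ≤ B * E y := fun y hy => by
    have hρy : m * |ρb y - ρp| ≤ E y := (h0 y hy).2.2.trans (h0 y hy).2.1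
    calc |b * φb y - a * ρb y| ≤ b * |φb y - φp| + a / m * (m * |ρb y - ρp|) := by
          rw [← mul_assoc, div_mul_cancel₀ a hm0.ne']; exact abs_mul_sub_mul_le ha.le hb.le hcomp
      _ ≤ b * E y + a / m * E y := by gcongr; exact (h0 y hy).2.1
      _ = B * E y := by ring
  have hφ₁ := hsol.abs_derivWithin_phi_le hE (by positivity) (fun y hy => (h0 y hy).2.1) hφ₂ hx
  have hM0 : 0 ≤ M := (abs_nonneg _).trans (hM _ (h0 x hx).1)
  have hρ₁ : |derivWithin ρb (Ici 0) x| ≤ b / a * (A * E x) :=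
    (hsol.abs_derivWithin_rho_le hμ ha hb hp1 hp' hx).trans (by gcongr)
  have hρ₂ : |derivWithin (derivWithin ρb (Ici 0)) (Ici 0) x| ≤
      M * (b / a * (A * E x)) * (A * (a * ρp / (2 * b))) + b / a * (B * E x) :=
    (hsol.abs_derivWithin_derivWithin_rho_le hμ ha hb hp hp' hx (hM _ (h0 x hx).1)).trans
      (by gcongr; exacts [hφ₁.trans (by gcongr), hφ₂ x hx])
  rw [(hsol.hasDerivWithinAt_derivWithin_phi hx).derivWithin (uniqueDiffOn_Ici 0 x hx)]
  calc _ ≤ b / a * (A * E x) +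
        (M * (b / a * (A * E x)) * (A * (a * ρp / (2 * b))) + b / a * (B * E x)) +
        A * E x + B * E x + 1 / m * E x + E x := by
        linarith [hφ₂ x hx, (h0 x hx).2.1]
    _ = _ := by simp only [hEdef]; ring

end IsStatSol

theorem stmt1_general (p : ℝ → ℝ) (μ a b ρp φp : ℝ)
    (hμ : 0 < μ) (ha : 0 < a) (hb : 0 < b)
    (hp3 : ContDiffOn ℝ 3 p (Set.Ioi 0))
    (hp' : ∀ ρ : ℝ, 0 < ρ → a * μ / b * ρ < deriv p ρ)
    (hρp : 0 < ρp) (hcomp : a * ρp = b * φp) :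
    ∃ C > 0, ∃ lam > 0, ∃ δ₀ > 0, ∀ φm : ℝ, φm ≠ φp → CondPlus p μ ρp φp φm →
      |φm - φp| ≤ δ₀ →
      ∀ ρb φb : ℝ → ℝ, IsStatSol p μ a b ρp φp φm ρb φb →
        (∀ x ∈ Set.Ici (0:ℝ),
          DifferentiableWithinAt ℝ ρb (Set.Ici 0) x ∧
          DifferentiableWithinAt ℝ (derivWithin ρb (Set.Ici 0)) (Set.Ici 0) x ∧
          DifferentiableWithinAt ℝ φb (Set.Ici 0) x ∧
          DifferentiableWithinAt ℝ (derivWithin φb (Set.Ici 0)) (Set.Ici 0) x) ∧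
        (∀ x : ℝ, 0 ≤ x →
          |derivWithin ρb (Set.Ici 0) x| +
          |derivWithin (derivWithin ρb (Set.Ici 0)) (Set.Ici 0) x| +
          |derivWithin φb (Set.Ici 0) x| +
          |derivWithin (derivWithin φb (Set.Ici 0)) (Set.Ici 0) x| +
          |ρb x - ρp| + |φb x - φp| ≤ C * Real.exp (-lam * x) * |φm - φp|) := by
  have hp2 : ContDiffOn ℝ 2 p (Ioi 0) := hp3.of_le (by norm_num)
  have hp0 : ∀ s > 0, deriv p s ≠ 0 := fun s hs => (deriv_pos_of_mul_lt_deriv hμ ha hb hp' hs).ne'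
  have hJ : Metric.closedBall ρp (ρp / 2) ⊆ Ioi 0 := fun s hs => by
    rw [Metric.mem_closedBall, Real.dist_eq, abs_le] at hs
    rw [mem_Ioi]
    linarith [hs.1]
  have hJc : IsCompact (Metric.closedBall ρp (ρp / 2)) := isCompact_closedBall ρp (ρp / 2)
  obtain ⟨τ, hτ, hmin⟩ := hJc.exists_isMinOn (Metric.nonempty_closedBall.2 (by positivity))
    ((continuousOn_deriv_div_mul hμ.ne'
      (hp2.continuousOn_deriv_of_isOpen isOpen_Ioi (by norm_num))).mono hJ)
  obtain ⟨M, hM⟩ := hJc.exists_bound_of_continuousOn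
    ((continuousOn_deriv_mul_div_deriv (μ := μ) hp2 hp0).mono hJ)
  have hm : a / b < deriv p τ / (μ * τ) := div_lt_deriv_div hμ hp' (hJ hτ)
  have hm0 : 0 < deriv p τ / (μ * τ) := lt_trans (by positivity) hm
  have hM0 : 0 ≤ M := (norm_nonneg _).trans (hM ρp (Metric.mem_closedBall_self (by positivity)))
  -- `C` and `λ = √(b - a / m)` are those of `sum_abs_le_mul_exp`, for `m` the minimum of
  -- `p' s / (μ s)` over the ball and `M` a bound of the derivative of its reciprocal there.
  refine ⟨_, by positivity, _, Real.sqrt_pos.2 (sub_pos.2 ((div_lt_comm₀ hb hm0).1 hm)),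
    a * ρp / (2 * b), by positivity, fun φm _ _ hK ρb φb hsol => ⟨fun x hx => ?_, fun x hx =>
      hsol.sum_abs_le_mul_exp (M := M) hμ ha hb hp2 hp' hρp hcomp hm (fun s hs => hmin hs)
        (fun s hs => by simpa using hM s hs) hK hx⟩⟩
  exact ⟨(hsol.1.differentiableOn one_ne_zero) x hx,
    (hsol.hasDerivWithinAt_derivWithin_rho hp2 hp0 hx).differentiableWithinAt,
    (hsol.2.1.differentiableOn two_ne_zero) x hx,
    (hsol.hasDerivWithinAt_derivWithin_phi hx).differentiableWithinAt⟩

/-- Exponential decay of the stationary solution: there are `C, λ, δ₀ > 0` depending only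
on `ρ₊, a, b, μ, p` (independent of `φ₋ - φ₊`) such that if `|φ₋ - φ₊| ≤ δ₀` then any
classical stationary solution is twice differentiable (one-sidedly on `[0,∞)`) and
`|ρ̄'| + |ρ̄''| + |φ̄'| + |φ̄''| + |ρ̄ - ρ₊| + |φ̄ - φ₊| ≤ C e^{-λ x} |φ₋ - φ₊|` on `[0,∞)`. -/
theorem stmt1 (p : ℝ → ℝ) (μ a b ρp φp : ℝ)
    (hμ : 0 < μ) (ha : 0 < a) (hb : 0 < b)
    (hp3 : ContDiffOn ℝ 3 p (Set.Ioi 0))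
    (hp' : ∀ ρ : ℝ, 0 < ρ → a * μ / b * ρ < deriv p ρ)
    (hρp : 0 < ρp) (hφp : 0 < φp) (hcomp : a * ρp = b * φp) :
    ∃ C > 0, ∃ lam > 0, ∃ δ₀ > 0, ∀ φm : ℝ, φm ≠ φp → CondPlus p μ ρp φp φm →
      |φm - φp| ≤ δ₀ →
      ∀ ρb φb : ℝ → ℝ, IsStatSol p μ a b ρp φp φm ρb φb →
        (∀ x ∈ Set.Ici (0:ℝ),
          DifferentiableWithinAt ℝ ρb (Set.Ici 0) x ∧
          DifferentiableWithinAt ℝ (derivWithin ρb (Set.Ici 0)) (Set.Ici 0) x ∧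
          DifferentiableWithinAt ℝ φb (Set.Ici 0) x ∧
          DifferentiableWithinAt ℝ (derivWithin φb (Set.Ici 0)) (Set.Ici 0) x) ∧
        (∀ x : ℝ, 0 ≤ x →
          |derivWithin ρb (Set.Ici 0) x| +
          |derivWithin (derivWithin ρb (Set.Ici 0)) (Set.Ici 0) x| +
          |derivWithin φb (Set.Ici 0) x| +
          |derivWithin (derivWithin φb (Set.Ici 0)) (Set.Ici 0) x| +
          |ρb x - ρp| + |φb x - φp| ≤ C * Real.exp (-lam * x) * |φm - φp|) :=
  stmt1_general p μ a b ρp φp hμ ha hb hp3 hp' hρp hcomp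

end
end

section
/- There exists a unique constant ρ₋ > 0 such that F(ρ₋) = φ₋ − φ₊. Moreover ρ₋ > ρ₊ if and only if φ₋ > φ₊, and ρ₋ < ρ₊ if and only if φ₋ < φ₊. -/
open MeasureTheory Set Filter Topology

noncomputable section

/-!
`F` is a primitive of `f τ = p'(τ)/(μ τ)`, and the pressure condition gives `f > a/b > 0` on
`(0, ∞)`. Hence `F` is continuous and strictly increasing on `(0, ∞)`, grows at least linearly
at infinity, and stays above `φ₋ - φ₊` near `0` only if `f` is integrable on `(0, ρ₊)` with
`∫₀^{ρ₊} f ≤ φ₊ - φ₋`, which the hypothesis on `φ₋` excludes. The intermediate value theorem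
then gives `ρ₋`, strict monotonicity its uniqueness, and comparing `F(ρ₋)` with `F(ρ₊) = 0`
gives the position of `ρ₋` relative to `ρ₊`.
-/

theorem integrableOn_Ioo_and_setIntegral_le_of_intervalIntegral_le {f : ℝ → ℝ} {a b M : ℝ}
    (hab : a < b) (hfi : ∀ s ∈ Ioo a b, IntegrableOn f (Ioc s b))
    (hf : ∀ x ∈ Ioc a b, 0 ≤ f x) (hM : ∀ s ∈ Ioo a b, ∫ x in s..b, f x ≤ M) :
    IntegrableOn f (Ioo a b) ∧ ∫ x in Ioo a b, f x ≤ M := by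
  set s : ℕ → ℝ := fun n => a + (b - a) / (n + 2)
  have hs : ∀ n, s n ∈ Ioo a b := fun n => by
    have : (b - a) / (n + 2) < b - a :=
      div_lt_self (by linarith) (by linarith [n.cast_nonneg (α := ℝ)])
    exact ⟨lt_add_of_pos_right a (by positivity), by linarith⟩
  have hs_tendsto : Tendsto s atTop (𝓝 a) := by
    simpa using tendsto_const_nhds.add (tendsto_const_div_atTop_nhds_zero_nat (b - a)
      |>.comp (tendsto_add_atTop_nat 2) |>.congr fun n => by simp)
  have hIoc_le : ∀ n, ∫ x in Ioc (s n) b, f x ≤ M := fun n => by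
    rw [← intervalIntegral.integral_of_le (hs n).2.le]
    exact hM _ (hs n)
  have hIoc : IntegrableOn f (Ioc a b) := by
    refine integrableOn_Ioc_of_intervalIntegral_norm_bounded_left (I := M)
      (fun n => hfi _ (hs n)) hs_tendsto (Eventually.of_forall fun n => ?_)
    refine le_of_eq_of_le (setIntegral_congr_fun measurableSet_Ioc fun x hx => ?_) (hIoc_le n)
    exact Real.norm_of_nonneg (hf x ⟨(hs n).1.trans hx.1, hx.2⟩)
  have hlim := AECover.integral_tendsto_of_countably_generated
    (aecover_Ioc_of_Ioc hs_tendsto tendsto_const_nhds) hIoc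
  simp only [Measure.restrict_restrict measurableSet_Ioc] at hlim
  refine ⟨hIoc.mono_set Ioo_subset_Ioc_self, ?_⟩
  rw [← integral_Ioc_eq_integral_Ioo]
  refine le_of_tendsto' hlim fun n => ?_
  rw [inter_eq_left.2 (Ioc_subset_Ioc_left (hs n).1.le)]
  exact hIoc_le n

section IntegralOnIoi

variable {f : ℝ → ℝ} {r : ℝ}

theorem intervalIntegrable_of_continuousOn_Ioi (hf : ContinuousOn f (Ioi 0)) {s₁ s₂ : ℝ}
    (h₁ : 0 < s₁) (h₂ : 0 < s₂) : IntervalIntegrable f volume s₁ s₂ :=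
  (hf.mono fun _ hx => (lt_min h₁ h₂).trans_le hx.1).intervalIntegrable

theorem hasDerivAt_integral_of_continuousOn_Ioi (hf : ContinuousOn f (Ioi 0)) (hr : 0 < r)
    {s : ℝ} (hs : 0 < s) : HasDerivAt (fun u => ∫ τ in r..u, f τ) (f s) s :=
  intervalIntegral.integral_hasDerivAt_right (intervalIntegrable_of_continuousOn_Ioi hf hr hs)
    (hf.stronglyMeasurableAtFilter isOpen_Ioi s hs) (hf.continuousAt (Ioi_mem_nhds hs))

theorem continuousOn_integral_of_continuousOn_Ioi (hf : ContinuousOn f (Ioi 0)) (hr : 0 < r) :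
    ContinuousOn (fun u => ∫ τ in r..u, f τ) (Ioi 0) := fun _ hs =>
  (hasDerivAt_integral_of_continuousOn_Ioi hf hr hs).continuousAt.continuousWithinAt

theorem strictMonoOn_integral_of_pos (hf : ContinuousOn f (Ioi 0)) (hr : 0 < r)
    (hpos : ∀ x, 0 < x → 0 < f x) : StrictMonoOn (fun u => ∫ τ in r..u, f τ) (Ioi 0) := by
  refine strictMonoOn_of_deriv_pos (convex_Ioi 0)
    (continuousOn_integral_of_continuousOn_Ioi hf hr) fun x hx => ?_
  rw [interior_Ioi] at hx
  rw [(hasDerivAt_integral_of_continuousOn_Ioi hf hr hx).deriv]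
  exact hpos x hx

theorem tendsto_integral_atTop_of_le (hf : ContinuousOn f (Ioi 0)) (hr : 0 < r) {c : ℝ}
    (hc : 0 < c) (hcf : ∀ x, 0 < x → c ≤ f x) :
    Tendsto (fun u => ∫ τ in r..u, f τ) atTop atTop := by
  have hlin : Tendsto (fun u => c * (u - r)) atTop atTop :=
    (tendsto_atTop_add_const_right _ _ tendsto_id).const_mul_atTop hc
  refine tendsto_atTop_mono' _ ((eventually_ge_atTop r).mono fun u hu => ?_) hlin
  have hmono := intervalIntegral.integral_mono_on hu intervalIntegrable_const
    (intervalIntegrable_of_continuousOn_Ioi hf hr (hr.trans_le hu))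
    fun x hx => hcf x (hr.trans_le hx.1)
  rwa [intervalIntegral.integral_const, smul_eq_mul, mul_comm] at hmono

theorem exists_integral_le_of_not_integrableOn_or (hf : ContinuousOn f (Ioi 0)) (hr : 0 < r)
    (hpos : ∀ x, 0 < x → 0 ≤ f x) {t : ℝ}
    (ht : ¬ IntegrableOn f (Ioo 0 r) ∨ 0 < t + ∫ x in Ioo 0 r, f x) :
    ∃ s, 0 < s ∧ ∫ τ in r..s, f τ ≤ t := by
  by_contra! hgt
  obtain ⟨hfi, hle⟩ := integrableOn_Ioo_and_setIntegral_le_of_intervalIntegral_le (M := -t) hr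
    (fun s hs => (intervalIntegrable_of_continuousOn_Ioi hf hs.1 hr).1)
    (fun x hx => hpos x hx.1) fun s hs => by
      have := hgt s hs.1
      rw [intervalIntegral.integral_symm] at this
      linarith
  rcases ht with hni | hsum
  · exact hni hfi
  · linarith

end IntegralOnIoi

theorem stmt4_general (p : ℝ → ℝ) (μ a b ρp φp φm : ℝ)
    (hμ : 0 < μ) (ha : 0 < a) (hb : 0 < b)
    (hp3 : ContDiffOn ℝ 3 p (Set.Ioi 0))
    (hp' : ∀ ρ : ℝ, 0 < ρ → a * μ / b * ρ < deriv p ρ)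
    (hρp : 0 < ρp) (hint : CondPlus p μ ρp φp φm) :
    (∃! ρm : ℝ, 0 < ρm ∧ Ffun p μ ρp ρm = φm - φp) ∧
    (∀ ρm : ℝ, 0 < ρm → Ffun p μ ρp ρm = φm - φp →
      ((ρp < ρm ↔ φp < φm) ∧ (ρm < ρp ↔ φm < φp))) := by
  set f : ℝ → ℝ := fun τ => deriv p τ / (μ * τ)
  have hf : ContinuousOn f (Ioi 0) :=
    (hp3.continuousOn_deriv_of_isOpen isOpen_Ioi (by norm_num)).div
      (continuousOn_const.mul continuousOn_id) fun x hx => (mul_pos hμ hx).ne'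
  have hf_ge : ∀ x, 0 < x → a / b ≤ f x := fun x hx => by
    rw [le_div_iff₀ (mul_pos hμ hx)]
    linarith [hp' x hx, show a * μ / b * x = a / b * (μ * x) by ring]
  have hab : 0 < a / b := div_pos ha hb
  have hmono : StrictMonoOn (Ffun p μ ρp) (Ioi 0) :=
    strictMonoOn_integral_of_pos hf hρp fun x hx => hab.trans_le (hf_ge x hx)
  have hF_ρp : Ffun p μ ρp ρp = 0 := intervalIntegral.integral_same
  obtain ⟨s₁, hs₁, hs₁_le⟩ := exists_integral_le_of_not_integrableOn_or hf hρp
    (fun x hx => (hab.trans_le (hf_ge x hx)).le) hint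
  obtain ⟨s₂, hs₂_ge, hs₂⟩ := ((tendsto_integral_atTop_of_le hf hρp hab hf_ge).eventually_ge_atTop
    (φm - φp)).and (eventually_gt_atTop 0) |>.exists
  obtain ⟨ρm, hρm, hρm_eq⟩ := isPreconnected_Ioi.intermediate_value hs₁ hs₂
    (continuousOn_integral_of_continuousOn_Ioi hf hρp) ⟨hs₁_le, hs₂_ge⟩
  refine ⟨⟨ρm, ⟨hρm, hρm_eq⟩, fun y hy => hmono.injOn hy.1 hρm (hy.2.trans hρm_eq.symm)⟩,
    fun ρ hρ hρ_eq => ?_⟩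
  rw [← hmono.lt_iff_lt hρp hρ, ← hmono.lt_iff_lt hρ hρp, hF_ρp, hρ_eq, sub_pos, sub_neg]
  exact ⟨Iff.rfl, Iff.rfl⟩

/-- There exists a unique `ρ₋ > 0` with `F(ρ₋) = φ₋ - φ₊`; moreover `ρ₋ > ρ₊ ↔ φ₋ > φ₊`
and `ρ₋ < ρ₊ ↔ φ₋ < φ₊`. -/
theorem stmt4 (p : ℝ → ℝ) (μ a b ρp φp φm : ℝ)
    (hμ : 0 < μ) (ha : 0 < a) (hb : 0 < b)
    (hp3 : ContDiffOn ℝ 3 p (Set.Ioi 0))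
    (hp' : ∀ ρ : ℝ, 0 < ρ → a * μ / b * ρ < deriv p ρ)
    (hρp : 0 < ρp) (hφp : 0 < φp) (hcomp : a * ρp = b * φp)
    (hne : φm ≠ φp) (hint : CondPlus p μ ρp φp φm) :
    (∃! ρm : ℝ, 0 < ρm ∧ Ffun p μ ρp ρm = φm - φp) ∧
    (∀ ρm : ℝ, 0 < ρm → Ffun p μ ρp ρm = φm - φp →
      ((ρp < ρm ↔ φp < φm) ∧ (ρm < ρp ↔ φm < φp))) :=
  stmt4_general p μ a b ρp φp φm hμ ha hb hp3 hp' hρp hint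

end
end

section
/- The constants satisfy |φ₋ − φ₊| ≥ (a/b)·|ρ₋ − ρ₊|. -/
open MeasureTheory Set Filter Topology

noncomputable section

/-! Since `p' > (aμ/b) ρ`, the integrand of `F` is bounded below by `a/b`; integrating this bound
between `ρ₊` and `ρ₋` gives `|F(ρ₋)| ≥ (a/b) |ρ₋ - ρ₊|`, and `F(ρ₋) = φ₋ - φ₊`. -/

theorem mul_abs_sub_le_abs_intervalIntegral {f : ℝ → ℝ} {m c d : ℝ}
    (hf : IntervalIntegrable f volume c d) (hm : ∀ x ∈ uIcc c d, m ≤ f x) :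
    m * |d - c| ≤ |∫ x in c..d, f x| := by
  wlog hcd : c ≤ d generalizing c d
  · have := this hf.symm (uIcc_comm c d ▸ hm) (le_of_not_ge hcd)
    rwa [intervalIntegral.integral_symm, abs_neg, abs_sub_comm]
  have hm' : ∀ x ∈ Icc c d, m ≤ f x := fun x hx => hm x (uIcc_of_le hcd ▸ hx)
  calc m * |d - c| = ∫ _ in c..d, m := by
        rw [intervalIntegral.integral_const, smul_eq_mul, abs_of_nonneg (sub_nonneg.2 hcd),
          mul_comm]
    _ ≤ ∫ x in c..d, f x := intervalIntegral.integral_mono_on hcd intervalIntegrable_const hf hm'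
    _ ≤ |∫ x in c..d, f x| := le_abs_self _

theorem continuousOn_deriv_div_mul_self {p : ℝ → ℝ} {μ : ℝ} (hμ : μ ≠ 0)
    (hp : ContDiffOn ℝ 1 p (Ioi 0)) :
    ContinuousOn (fun τ => deriv p τ / (μ * τ)) (Ioi 0) :=
  (hp.continuousOn_deriv_of_isOpen isOpen_Ioi le_rfl).div (by fun_prop)
    fun _ hτ => mul_ne_zero hμ hτ.ne'

theorem le_deriv_div_mul_self {p : ℝ → ℝ} {μ a b τ : ℝ} (hμ : 0 < μ) (hτ : 0 < τ)
    (hp' : a * μ / b * τ < deriv p τ) :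
    a / b ≤ deriv p τ / (μ * τ) := by
  rw [le_div_iff₀ (mul_pos hμ hτ)]
  linarith [show a / b * (μ * τ) = a * μ / b * τ by ring]

theorem stmt9_general (p : ℝ → ℝ) (μ a b ρp φp φm ρm : ℝ)
    (hμ : 0 < μ)
    (hp3 : ContDiffOn ℝ 3 p (Set.Ioi 0))
    (hp' : ∀ ρ : ℝ, 0 < ρ → a * μ / b * ρ < deriv p ρ)
    (hρp : 0 < ρp)
    (hρm : 0 < ρm) (hFρm : Ffun p μ ρp ρm = φm - φp) :
    a / b * |ρm - ρp| ≤ |φm - φp| := by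
  have hpos : uIcc ρp ρm ⊆ Ioi 0 := fun x hx =>
    lt_of_lt_of_le (lt_min hρp hρm) hx.1
  have hintegrable : IntervalIntegrable (fun τ => deriv p τ / (μ * τ)) volume ρp ρm :=
    ((continuousOn_deriv_div_mul_self hμ.ne' (hp3.of_le (by norm_num))).mono
      hpos).intervalIntegrable
  rw [← hFρm]
  exact mul_abs_sub_le_abs_intervalIntegral hintegrable fun x hx =>
    le_deriv_div_mul_self hμ (hpos hx) (hp' x (hpos hx))

/-- `|φ₋ - φ₊| ≥ (a/b) |ρ₋ - ρ₊|`. -/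
theorem stmt9 (p : ℝ → ℝ) (μ a b ρp φp φm ρm : ℝ)
    (hμ : 0 < μ) (ha : 0 < a) (hb : 0 < b)
    (hp3 : ContDiffOn ℝ 3 p (Set.Ioi 0))
    (hp' : ∀ ρ : ℝ, 0 < ρ → a * μ / b * ρ < deriv p ρ)
    (hρp : 0 < ρp) (hφp : 0 < φp) (hcomp : a * ρp = b * φp)
    (hne : φm ≠ φp) (hint : CondPlus p μ ρp φp φm)
    (hρm : 0 < ρm) (hFρm : Ffun p μ ρp ρm = φm - φp) :
    a / b * |ρm - ρp| ≤ |φm - φp| :=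
  stmt9_general p μ a b ρp φp φm ρm hμ hp3 hp' hρp hρm hFρm

end
end
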